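/- arXiv:1306.1257 — 5 statements merged into one kernel-verified Lean document; each statement's English description precedes it below -/
import Mathlib

section
/- Let S be a Steiner triple system on a finite set X with associated Steiner quasigroup operation ⋆, and let T be a 3-element subset of X with T ∉ S. Then T is of the form {a⋆b, b⋆c, c⋆a} for some pairwise distinct a,b,c ∈ X with {a,b,c} ∉ S if and only if S ∪ {T} contains a pasch configuration whose set of four blocks contains T. -/
/-- A Steiner quasigroup structure on `X`. -/
def IsSteinerQuasigroup {X : Type*} (star : X → X → X) : Prop :=
  (∀ a, star a a = a) ∧ (∀ a b, star a b = star b a) ∧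
    (∀ a b, star a (star a b) = b)

/-- The blocks of the Steiner triple system associated to a Steiner quasigroup:
the 3-element subsets `{a,b,c}` with `a,b,c` distinct and `a ⋆ b = c`. -/
def blocksOf {X : Type*} [DecidableEq X] (star : X → X → X) : Set (Finset X) :=
  {B | ∃ a b c : X, a ≠ b ∧ a ≠ c ∧ b ≠ c ∧ B = {a, b, c} ∧ star a b = c}

/-- `A(S) = {{a⋆b, b⋆c, c⋆a} : a,b,c pairwise distinct, {a,b,c} ∉ S}`. -/
def ASet {X : Type*} [DecidableEq X] (star : X → X → X) : Set (Finset X) :=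
  {B | ∃ a b c : X, a ≠ b ∧ a ≠ c ∧ b ≠ c ∧
    ({a, b, c} : Finset X) ∉ blocksOf star ∧
    B = {star a b, star b c, star c a}}

/-- `B(S) = {{a⋆b, b⋆c, c⋆a} : a,b,c pairwise distinct}`. -/
def BSet {X : Type*} [DecidableEq X] (star : X → X → X) : Set (Finset X) :=
  {B | ∃ a b c : X, a ≠ b ∧ a ≠ c ∧ b ≠ c ∧
    B = {star a b, star b c, star c a}}

/-- `α(S) = |A(S)|`. -/
noncomputable def alphaInv {X : Type*} [DecidableEq X] (star : X → X → X) : ℕ :=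
  (ASet star).ncard

/-- `β(S) = |B(S)|`. -/
noncomputable def betaInv {X : Type*} [DecidableEq X] (star : X → X → X) : ℕ :=
  (BSet star).ncard

/-- A pasch configuration: four blocks `{a,b,c}, {a,d,e}, {f,b,d}, {f,c,e}`
with `a,b,c,d,e,f` pairwise distinct. -/
def IsPasch {X : Type*} [DecidableEq X] (P : Set (Finset X)) : Prop :=
  ∃ a b c d e f : X, ([a, b, c, d, e, f] : List X).Pairwise (· ≠ ·) ∧
    P = {({a, b, c} : Finset X), {a, d, e}, {f, b, d}, {f, c, e}}

/-- A Steiner triple system is anti-pasch if it contains no pasch configuration. -/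
def IsAntiPasch {X : Type*} [DecidableEq X] (star : X → X → X) : Prop :=
  ∀ P : Set (Finset X), IsPasch P → ¬ P ⊆ blocksOf star


section helpers
variable {X : Type*} [DecidableEq X] {star : X → X → X}

lemma star_table (hq : IsSteinerQuasigroup star) {a b c : X} (h : star a b = c) :
    star b a = c ∧ star a c = b ∧ star c a = b ∧ star b c = a ∧ star c b = a := by
  obtain ⟨h1, h2, h3⟩ := hq
  have hba : star b a = c := (h2 b a).trans h
  have hac : star a c = b := by rw [← h, h3]
  have hbc : star b c = a := by rw [← hba, h3]
  exact ⟨hba, hac, (h2 c a).trans hac, hbc, (h2 c b).trans hbc⟩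

lemma star_ne_left (hq : IsSteinerQuasigroup star) {a b : X} (h : a ≠ b) : star a b ≠ a := by
  intro he
  obtain ⟨h1, h2, h3⟩ := hq
  have hthis := h3 a b
  rw [he, h1] at hthis
  exact h hthis

lemma star_ne_right (hq : IsSteinerQuasigroup star) {a b : X} (h : a ≠ b) : star a b ≠ b := by
  rw [hq.2.1]; exact star_ne_left hq h.symm

lemma mem_blocksOf_of (hq : IsSteinerQuasigroup star) {a b : X} (hab : a ≠ b)
    {B : Finset X} (hB : B = {a, b, star a b}) : B ∈ blocksOf star :=
  ⟨a, b, star a b, hab, (star_ne_left hq hab).symm, (star_ne_right hq hab).symm, hB, rfl⟩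

lemma eq_of_mem_blocksOf (hq : IsSteinerQuasigroup star) {p q r : X}
    (hpq : p ≠ q) (hpr : p ≠ r) (hqr : q ≠ r)
    (h : ({p, q, r} : Finset X) ∈ blocksOf star) : star p q = r := by
  obtain ⟨a, b, c, hab, hac, hbc, heq, hs⟩ := h
  obtain ⟨t1, t2, t3, t4, t5⟩ := star_table hq hs
  have hp : p = a ∨ p = b ∨ p = c := by
    have : p ∈ ({a, b, c} : Finset X) := heq ▸ (by simp)
    simpa using this
  have hq' : q = a ∨ q = b ∨ q = c := by
    have : q ∈ ({a, b, c} : Finset X) := heq ▸ (by simp)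
    simpa using this
  have hr : r = a ∨ r = b ∨ r = c := by
    have : r ∈ ({a, b, c} : Finset X) := heq ▸ (by simp)
    simpa using this
  rcases hp with rfl | rfl | rfl <;> rcases hq' with rfl | rfl | rfl <;>
    rcases hr with rfl | rfl | rfl <;> simp_all

end helpers

set_option maxHeartbeats 1600000 in
/-- `T ∈ A(S)` iff `S ∪ {T}` contains a pasch configuration one of whose
four blocks is `T`. -/
theorem stmt1 {X : Type*} [Fintype X] [DecidableEq X]
    (star : X → X → X) (hq : IsSteinerQuasigroup star)
    (T : Finset X) (hT3 : T.card = 3) (hTS : T ∉ blocksOf star) :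
    (∃ a b c : X, a ≠ b ∧ a ≠ c ∧ b ≠ c ∧
        ({a, b, c} : Finset X) ∉ blocksOf star ∧
        T = {star a b, star b c, star c a}) ↔
      (∃ P : Set (Finset X), IsPasch P ∧ T ∈ P ∧ P ⊆ insert T (blocksOf star)) := by
  obtain ⟨hid, hcm, hle⟩ := id hq
  constructor
  · rintro ⟨a, b, c, hab, hac, hbc, habc, hTeq⟩
    set x := star a b with hx
    set y := star b c with hy
    set z := star c a with hz
    have hxa : x ≠ a := star_ne_left hq hab
    have hxb : x ≠ b := star_ne_right hq hab
    have hyb : y ≠ b := star_ne_left hq hbc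
    have hyc : y ≠ c := star_ne_right hq hbc
    have hzc : z ≠ c := star_ne_left hq hac.symm
    have hza : z ≠ a := star_ne_right hq hac.symm
    have hxc : x ≠ c := by
      intro h
      exact habc (mem_blocksOf_of hq hab (by rw [← hx, h]))
    have hya : y ≠ a := by
      intro h
      refine habc (mem_blocksOf_of hq hbc ?_)
      rw [← hy, h]; ext t; simp; tauto
    have hzb : z ≠ b := by
      intro h
      refine habc (mem_blocksOf_of hq hac.symm ?_)
      rw [← hz, h]; ext t; simp; tauto
    have hxy : x ≠ y := by
      intro h
      have h1 := hle b a
      rw [hcm b a, ← hx, h, hy, hle] at h1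
      exact hac h1.symm
    have hyz : y ≠ z := by
      intro h
      have h1 := hle c b
      rw [hcm c b, ← hy, h, hz, hle] at h1
      exact hab h1
    have hxz : x ≠ z := by
      intro h
      have h1 := hle a b
      rw [← hx, h, hz, hcm c a, hle] at h1
      exact hbc h1.symm
    refine ⟨{({x, y, z} : Finset X), {x, b, a}, {c, y, b}, {c, z, a}},
      ⟨x, y, z, b, a, c, ?_, rfl⟩, by simp [hTeq], ?_⟩
    · have hba := hab.symm
      refine List.Pairwise.cons ?_ (List.Pairwise.cons ?_ (List.Pairwise.cons ?_
        (List.Pairwise.cons ?_ (List.Pairwise.cons ?_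
          (List.Pairwise.cons ?_ List.Pairwise.nil))))) <;>
        intro t ht <;> fin_cases ht <;> assumption
    · rintro B hB
      simp only [Set.mem_insert_iff, Set.mem_singleton_iff] at hB
      rcases hB with rfl | rfl | rfl | rfl
      · exact Set.mem_insert_iff.mpr (Or.inl hTeq.symm)
      · refine Set.mem_insert_iff.mpr (Or.inr (mem_blocksOf_of hq hab.symm ?_))
        rw [hcm b a, ← hx]; ext t; simp; tauto
      · refine Set.mem_insert_iff.mpr (Or.inr (mem_blocksOf_of hq hbc ?_))
        rw [← hy]; ext t; simp; tauto
      · refine Set.mem_insert_iff.mpr (Or.inr (mem_blocksOf_of hq hac.symm ?_))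
        rw [← hz]; ext t; simp; tauto
  · rintro ⟨P, ⟨a, b, c, d, e, f, hpw, rfl⟩, hTP, hsub⟩
    simp only [List.pairwise_cons, List.mem_cons, List.mem_singleton,
      List.not_mem_nil] at hpw
    obtain ⟨h1, h2, h3, h4, h5, -, -⟩ := hpw
    have hef : e ≠ f := h5 f (by simp)
    have hab : a ≠ b := h1 b (by simp)
    have hac : a ≠ c := h1 c (by simp)
    have had : a ≠ d := h1 d (by simp)
    have hae : a ≠ e := h1 e (by simp)
    have haf : a ≠ f := h1 f (by simp)
    have hbc : b ≠ c := h2 c (by simp)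
    have hbd : b ≠ d := h2 d (by simp)
    have hbe : b ≠ e := h2 e (by simp)
    have hbf : b ≠ f := h2 f (by simp)
    have hcd : c ≠ d := h3 d (by simp)
    have hce : c ≠ e := h3 e (by simp)
    have hcf : c ≠ f := h3 f (by simp)
    have hde : d ≠ e := h4 e (by simp)
    have hdf : d ≠ f := h4 f (by simp)
    simp only [Set.mem_insert_iff, Set.mem_singleton_iff] at hTP
    -- helper facts about which blocks lie in blocksOf
    rcases hTP with hT | hT | hT | hT
    · -- T = {a,b,c}
      have hB2 : ({a, d, e} : Finset X) ∈ blocksOf star := by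
        have hm := hsub (show ({a, d, e} : Finset X) ∈ _ by simp)
        rcases Set.mem_insert_iff.mp hm with hm | hm
        · exfalso
          have hb : b ∈ ({a, d, e} : Finset X) := by rw [hm, hT]; simp
          simp only [Finset.mem_insert, Finset.mem_singleton] at hb; tauto
        · exact hm
      have hB3 : ({f, b, d} : Finset X) ∈ blocksOf star := by
        have hm := hsub (show ({f, b, d} : Finset X) ∈ _ by simp)
        rcases Set.mem_insert_iff.mp hm with hm | hm
        · exfalso
          have hb : f ∈ ({a, b, c} : Finset X) := by rw [← hT, ← hm]; simp
          simp only [Finset.mem_insert, Finset.mem_singleton] at hb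
          rcases hb with h | h | h
          exacts [haf h.symm, hbf h.symm, hcf h.symm]
        · exact hm
      have hB4 : ({f, c, e} : Finset X) ∈ blocksOf star := by
        have hm := hsub (show ({f, c, e} : Finset X) ∈ _ by simp)
        rcases Set.mem_insert_iff.mp hm with hm | hm
        · exfalso
          have hb : f ∈ ({a, b, c} : Finset X) := by rw [← hT, ← hm]; simp
          simp only [Finset.mem_insert, Finset.mem_singleton] at hb
          rcases hb with h | h | h
          exacts [haf h.symm, hbf h.symm, hcf h.symm]
        · exact hm
      have s2 := eq_of_mem_blocksOf hq had hae hde hB2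
      have s3 := eq_of_mem_blocksOf hq hbf.symm hdf.symm hbd hB3
      have s4 := eq_of_mem_blocksOf hq hcf.symm hef.symm hce hB4
      have tde : star d e = a := (star_table hq s2).2.2.2.1
      have tef : star e f = c := (star_table hq s4).2.2.1
      have tfd : star f d = b := (star_table hq s3).2.1
      refine ⟨d, e, f, hde, hdf, hef, ?_, ?_⟩
      · intro hmem
        have h' := eq_of_mem_blocksOf hq hde hdf hef hmem
        exact haf (tde.symm.trans h')
      · rw [tde, tef, tfd, hT]; ext t; simp; tauto
    · -- T = {a,d,e}
      have hB1 : ({a, b, c} : Finset X) ∈ blocksOf star := by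
        have hm := hsub (show ({a, b, c} : Finset X) ∈ _ by simp)
        rcases Set.mem_insert_iff.mp hm with hm | hm
        · exfalso
          have hb : b ∈ ({a, d, e} : Finset X) := by rw [← hT, ← hm]; simp
          simp only [Finset.mem_insert, Finset.mem_singleton] at hb; tauto
        · exact hm
      have hB3 : ({f, b, d} : Finset X) ∈ blocksOf star := by
        have hm := hsub (show ({f, b, d} : Finset X) ∈ _ by simp)
        rcases Set.mem_insert_iff.mp hm with hm | hm
        · exfalso
          have hb : f ∈ ({a, d, e} : Finset X) := by rw [← hT, ← hm]; simp
          simp only [Finset.mem_insert, Finset.mem_singleton] at hb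
          rcases hb with h | h | h
          exacts [haf h.symm, hdf h.symm, hef h.symm]
        · exact hm
      have hB4 : ({f, c, e} : Finset X) ∈ blocksOf star := by
        have hm := hsub (show ({f, c, e} : Finset X) ∈ _ by simp)
        rcases Set.mem_insert_iff.mp hm with hm | hm
        · exfalso
          have hb : f ∈ ({a, d, e} : Finset X) := by rw [← hT, ← hm]; simp
          simp only [Finset.mem_insert, Finset.mem_singleton] at hb
          rcases hb with h | h | h
          exacts [haf h.symm, hdf h.symm, hef h.symm]
        · exact hm
      have s1 := eq_of_mem_blocksOf hq hab hac hbc hB1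
      have s3 := eq_of_mem_blocksOf hq hbf.symm hdf.symm hbd hB3
      have s4 := eq_of_mem_blocksOf hq hcf.symm hef.symm hce hB4
      have tbc : star b c = a := (star_table hq s1).2.2.2.1
      have tcf : star c f = e := (star_table hq s4).1
      refine ⟨b, c, f, hbc, hbf, hcf, ?_, ?_⟩
      · intro hmem
        have h' := eq_of_mem_blocksOf hq hbc hbf hcf hmem
        exact haf (tbc.symm.trans h')
      · rw [tbc, tcf, s3, hT]; ext t; simp; tauto
    · -- T = {f,b,d}
      have hB1 : ({a, b, c} : Finset X) ∈ blocksOf star := by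
        have hm := hsub (show ({a, b, c} : Finset X) ∈ _ by simp)
        rcases Set.mem_insert_iff.mp hm with hm | hm
        · exfalso
          have hb : a ∈ ({f, b, d} : Finset X) := by rw [← hT, ← hm]; simp
          simp only [Finset.mem_insert, Finset.mem_singleton] at hb; tauto
        · exact hm
      have hB2 : ({a, d, e} : Finset X) ∈ blocksOf star := by
        have hm := hsub (show ({a, d, e} : Finset X) ∈ _ by simp)
        rcases Set.mem_insert_iff.mp hm with hm | hm
        · exfalso
          have hb : e ∈ ({f, b, d} : Finset X) := by rw [← hT, ← hm]; simp
          simp only [Finset.mem_insert, Finset.mem_singleton] at hb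
          rcases hb with h | h | h
          exacts [hef h, hbe h.symm, hde h.symm]
        · exact hm
      have hB4 : ({f, c, e} : Finset X) ∈ blocksOf star := by
        have hm := hsub (show ({f, c, e} : Finset X) ∈ _ by simp)
        rcases Set.mem_insert_iff.mp hm with hm | hm
        · exfalso
          have hb : c ∈ ({f, b, d} : Finset X) := by rw [← hT, ← hm]; simp
          simp only [Finset.mem_insert, Finset.mem_singleton] at hb
          rcases hb with h | h | h
          exacts [hcf h, hbc h.symm, hcd h]
        · exact hm
      have s1 := eq_of_mem_blocksOf hq hab hac hbc hB1
      have s2 := eq_of_mem_blocksOf hq had hae hde hB2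
      have s4 := eq_of_mem_blocksOf hq hcf.symm hef.symm hce hB4
      have tce : star c e = f := (star_table hq s4).2.2.2.1
      have tea : star e a = d := (star_table hq s2).2.2.1
      have tac : star a c = b := (star_table hq s1).2.1
      refine ⟨c, e, a, hce, hac.symm, hae.symm, ?_, ?_⟩
      · intro hmem
        have h' := eq_of_mem_blocksOf hq hce hac.symm hae.symm hmem
        exact haf (h'.symm.trans tce)
      · rw [tce, tea, tac, hT]; ext t; simp; tauto
    · -- T = {f,c,e}
      have hB1 : ({a, b, c} : Finset X) ∈ blocksOf star := by
        have hm := hsub (show ({a, b, c} : Finset X) ∈ _ by simp)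
        rcases Set.mem_insert_iff.mp hm with hm | hm
        · exfalso
          have hb : b ∈ ({f, c, e} : Finset X) := by rw [← hT, ← hm]; simp
          simp only [Finset.mem_insert, Finset.mem_singleton] at hb; tauto
        · exact hm
      have hB2 : ({a, d, e} : Finset X) ∈ blocksOf star := by
        have hm := hsub (show ({a, d, e} : Finset X) ∈ _ by simp)
        rcases Set.mem_insert_iff.mp hm with hm | hm
        · exfalso
          have hb : d ∈ ({f, c, e} : Finset X) := by rw [← hT, ← hm]; simp
          simp only [Finset.mem_insert, Finset.mem_singleton] at hb
          rcases hb with h | h | h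
          exacts [hdf h, hcd h.symm, hde h]
        · exact hm
      have hB3 : ({f, b, d} : Finset X) ∈ blocksOf star := by
        have hm := hsub (show ({f, b, d} : Finset X) ∈ _ by simp)
        rcases Set.mem_insert_iff.mp hm with hm | hm
        · exfalso
          have hb : b ∈ ({f, c, e} : Finset X) := by rw [← hT, ← hm]; simp
          simp only [Finset.mem_insert, Finset.mem_singleton] at hb; tauto
        · exact hm
      have s1 := eq_of_mem_blocksOf hq hab hac hbc hB1
      have s2 := eq_of_mem_blocksOf hq had hae hde hB2
      have s3 := eq_of_mem_blocksOf hq hbf.symm hdf.symm hbd hB3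
      have tbd : star b d = f := (star_table hq s3).2.2.2.1
      have tda : star d a = e := (star_table hq s2).1
      refine ⟨b, d, a, hbd, hab.symm, had.symm, ?_, ?_⟩
      · intro hmem
        have h' := eq_of_mem_blocksOf hq hbd hab.symm had.symm hmem
        exact haf (h'.symm.trans tbd)
      · rw [tbd, tda, s1, hT]; ext t; simp; tauto
end

section
/- Let S be a Steiner triple system of order n on a set X with operation ⋆, and let φ_S be the map from the 3-subsets of X not in S to A(S) given by φ_S({a,b,c}) = {a⋆b, b⋆c, c⋆a}. Then for every element {x,y,z} of A(S), the preimage φ_S^{-1}({x,y,z}) has at most n−3 elements. -/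
lemma steiner_cancel {X : Type*} {star : X → X → X}
    (hq : IsSteinerQuasigroup star) {a b c : X} (h : star a b = star a c) : b = c := by
  have hinv := hq.2.2
  have := congrArg (star a) h
  rwa [hinv, hinv] at this

lemma steiner_prod_ne {X : Type*} {star : X → X → X}
    (hq : IsSteinerQuasigroup star) {a b c : X}
    (hab : a ≠ b) (hac : a ≠ c) (hbc : b ≠ c) :
    star a b ≠ star b c ∧ star a b ≠ star c a ∧ star b c ≠ star c a := by
  have hcomm := hq.2.1
  refine ⟨fun h => hac ?_, fun h => hbc ?_, fun h => hab.symm ?_⟩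
  · refine steiner_cancel hq (a := b) ?_
    rw [← hcomm a b]; exact h
  · refine steiner_cancel hq (a := a) ?_
    rw [hcomm c a] at h; exact h
  · refine steiner_cancel hq (a := c) ?_
    rw [hcomm b c] at h; exact h

lemma exists_ordered {X : Type*} [DecidableEq X] {star : X → X → X}
    (hq : IsSteinerQuasigroup star) {x y z a b c : X}
    (hxy : x ≠ y) (hxz : x ≠ z) (hyz : y ≠ z)
    (hab : a ≠ b) (hac : a ≠ c) (hbc : b ≠ c)
    (hset : ({star a b, star b c, star c a} : Finset X) = {x, y, z}) :
    ∃ p q r : X, p ≠ q ∧ p ≠ r ∧ q ≠ r ∧ ({p, q, r} : Finset X) = {a, b, c} ∧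
      star p q = x ∧ star q r = y ∧ star r p = z := by
  obtain ⟨d1, d2, d3⟩ := steiner_prod_ne hq hab hac hbc
  have hcomm := hq.2.1
  have h1 : star a b ∈ ({x, y, z} : Finset X) := by rw [← hset]; simp
  have h2 : star b c ∈ ({x, y, z} : Finset X) := by rw [← hset]; simp
  have h3 : star c a ∈ ({x, y, z} : Finset X) := by rw [← hset]; simp
  simp only [Finset.mem_insert, Finset.mem_singleton] at h1 h2 h3
  rcases h1 with h1 | h1 | h1
  · -- a⋆b = x
    rcases h2 with h2 | h2 | h2
    · exact absurd (h1.trans h2.symm) d1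
    · -- b⋆c = y, force c⋆a = z
      have h3' : star c a = z := by
        rcases h3 with h3 | h3 | h3
        · exact absurd (h1.trans h3.symm) d2
        · exact absurd (h2.trans h3.symm) d3
        · exact h3
      exact ⟨a, b, c, hab, hac, hbc, rfl, h1, h2, h3'⟩
    · -- b⋆c = z, force c⋆a = y; use (b,a,c)
      have h3' : star c a = y := by
        rcases h3 with h3 | h3 | h3
        · exact absurd (h1.trans h3.symm) d2
        · exact h3
        · exact absurd (h2.trans h3.symm) d3
      refine ⟨b, a, c, hab.symm, hbc, hac, ?_, (hcomm b a).trans h1,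
        (hcomm a c).trans h3', (hcomm c b).trans h2⟩
      ext t; simp; tauto
  · -- a⋆b = y
    rcases h3 with h3 | h3 | h3
    · -- c⋆a = x, force b⋆c = z; use (c,a,b)
      have h2' : star b c = z := by
        rcases h2 with h2 | h2 | h2
        · exact absurd (h2.trans h3.symm) d3
        · exact absurd (h1.trans h2.symm) d1
        · exact h2
      refine ⟨c, a, b, hac.symm, hbc.symm, hab, ?_, h3, h1, h2'⟩
      ext t; simp; tauto
    · exact absurd (h1.trans h3.symm) d2
    · -- c⋆a = z, force b⋆c = x; use (c,b,a)
      have h2' : star b c = x := by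
        rcases h2 with h2 | h2 | h2
        · exact h2
        · exact absurd (h1.trans h2.symm) d1
        · exact absurd (h2.trans h3.symm) d3
      refine ⟨c, b, a, hbc.symm, hac.symm, hab.symm, ?_, (hcomm c b).trans h2',
        (hcomm b a).trans h1, (hcomm a c).trans h3⟩
      ext t; simp; tauto
  · -- a⋆b = z
    rcases h2 with h2 | h2 | h2
    · -- b⋆c = x, force c⋆a = y; use (b,c,a)
      have h3' : star c a = y := by
        rcases h3 with h3 | h3 | h3
        · exact absurd (h2.trans h3.symm) d3
        · exact h3
        · exact absurd (h1.trans h3.symm) d2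
      refine ⟨b, c, a, hbc, hab.symm, hac.symm, ?_, h2, h3', h1⟩
      ext t; simp; tauto
    · -- b⋆c = y, force c⋆a = x; use (a,c,b)
      have h3' : star c a = x := by
        rcases h3 with h3 | h3 | h3
        · exact h3
        · exact absurd (h2.trans h3.symm) d3
        · exact absurd (h1.trans h3.symm) d2
      refine ⟨a, c, b, hac, hab, hbc.symm, ?_, (hcomm a c).trans h3',
        (hcomm c b).trans h2, (hcomm b a).trans h1⟩
      ext t; simp; tauto
    · exact absurd (h1.trans h2.symm) d1

/-- Each fiber of the map `φ_S : P₃(X) \ S → A(S)` has at most `n - 3` elements. -/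
theorem stmt2 {X : Type*} [Fintype X] [DecidableEq X]
    (star : X → X → X) (hq : IsSteinerQuasigroup star)
    (n : ℕ) (hcard : Fintype.card X = n)
    (B : Finset X) (hB : B ∈ ASet star) :
    {T : Finset X | T ∉ blocksOf star ∧
        ∃ a b c : X, a ≠ b ∧ a ≠ c ∧ b ≠ c ∧ T = {a, b, c} ∧
          ({star a b, star b c, star c a} : Finset X) = B}.ncard ≤ n - 3 := by
  obtain ⟨a0, b0, c0, hab0, hac0, hbc0, hnb0, hBeq⟩ := hB
  set x := star a0 b0 with hxdef
  set y := star b0 c0 with hydef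
  set z := star c0 a0 with hzdef
  obtain ⟨hxy, hxz, hyz⟩ := steiner_prod_ne hq hab0 hac0 hbc0
  rw [← hxdef, ← hydef] at hxy
  rw [← hxdef, ← hzdef] at hxz
  rw [← hydef, ← hzdef] at hyz
  have hi := hq.1
  have hcomm := hq.2.1
  have hinv := hq.2.2
  set g : X → Finset X := fun p => ({p, star p x, star (star p x) y} : Finset X) with hg
  have key : {T : Finset X | T ∉ blocksOf star ∧
      ∃ a b c : X, a ≠ b ∧ a ≠ c ∧ b ≠ c ∧ T = {a, b, c} ∧
        ({star a b, star b c, star c a} : Finset X) = B} ⊆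
      ↑((Finset.univ \ ({x, y, z} : Finset X)).image g) := by
    rintro T ⟨hTnb, a, b, c, hab, hac, hbc, hTeq, hprod⟩
    have hset : ({star a b, star b c, star c a} : Finset X) = {x, y, z} :=
      hprod.trans hBeq
    obtain ⟨p, q, r, hpq, hpr, hqr, hperm, hpx, hqy, hrz⟩ :=
      exists_ordered hq hxy hxz hyz hab hac hbc hset
    have hq2 : star p x = q := by rw [← hpx, hinv]
    have hr2 : star q y = r := by rw [← hqy, hinv]
    have hpnx : p ≠ x := by
      intro h
      have h1 : star p q = p := hpx.trans h.symm
      have : q = p := by rw [← hinv p q, h1, hi]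
      exact hpq this.symm
    have hpny : p ≠ y := by
      intro h
      exact hTnb ⟨q, r, p, hqr, hpq.symm, hpr.symm, by
        rw [hTeq, ← hperm]; ext t; simp; tauto, hqy.trans h.symm⟩
    have hpnz : p ≠ z := by
      intro h
      have h1 : star r p = p := hrz.trans h.symm
      have h2 : star p r = star p p := by rw [hcomm p r, h1, hi]
      exact hpr (steiner_cancel hq h2).symm
    rw [Finset.mem_coe, Finset.mem_image]
    refine ⟨p, by simp [hpnx, hpny, hpnz], ?_⟩
    show ({p, star p x, star (star p x) y} : Finset X) = T
    rw [hq2, hr2, hTeq]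
    exact hperm
  calc {T : Finset X | T ∉ blocksOf star ∧
      ∃ a b c : X, a ≠ b ∧ a ≠ c ∧ b ≠ c ∧ T = {a, b, c} ∧
        ({star a b, star b c, star c a} : Finset X) = B}.ncard
      ≤ ((Finset.univ \ ({x, y, z} : Finset X)).image g).card := by
        rw [← Set.ncard_coe_finset]
        exact Set.ncard_le_ncard key (Finset.finite_toSet _)
    _ ≤ (Finset.univ \ ({x, y, z} : Finset X)).card := Finset.card_image_le
    _ = n - 3 := by
        rw [Finset.card_sdiff_of_subset (Finset.subset_univ _), Finset.card_univ, hcard]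
        congr 1
        rw [Finset.card_insert_of_notMem (by simp [hxy, hxz]),
          Finset.card_insert_of_notMem (by simp [hyz]), Finset.card_singleton]
end

section
/- Let S be a Steiner triple system of order n with n > 3. Then β(S) = (1/3)·C(n,2) if and only if α(S) = (1/3)·C(n,2). -/
set_option linter.unusedSectionVars false

section Helpers

variable {X : Type*} [DecidableEq X] {star : X → X → X}

lemma sq_cancel (hq : IsSteinerQuasigroup star) {a b c : X}
    (h : star a b = star a c) : b = c := by
  have h2 := congrArg (star a) h
  rwa [hq.2.2, hq.2.2] at h2

lemma sq_ne_fst (hq : IsSteinerQuasigroup star) {p q : X} (h : p ≠ q) :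
    star p q ≠ p := by
  intro he
  have h2 := hq.2.2 p q
  rw [he, hq.1] at h2
  exact h h2

lemma sq_ne_snd (hq : IsSteinerQuasigroup star) {p q : X} (h : p ≠ q) :
    star p q ≠ q := by
  intro he
  rw [hq.2.1] at he
  have : p = q := sq_cancel hq (he.trans (hq.1 q).symm)
  exact h this

/-- `star x y ≠ star y z` when `x ≠ z`. -/
lemma sq_img_ne (hq : IsSteinerQuasigroup star) {x y z : X} (h : x ≠ z) :
    star x y ≠ star y z := by
  intro he
  rw [hq.2.1 x y] at he
  exact h (sq_cancel hq he)

lemma sq_img_ne' (hq : IsSteinerQuasigroup star) {x y z : X} (h : y ≠ z) :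
    star x y ≠ star z x := by
  intro he
  rw [hq.2.1 z x] at he
  exact h (sq_cancel hq he)

lemma block_mk (hq : IsSteinerQuasigroup star) {p q : X} (h : p ≠ q) :
    ({p, q, star p q} : Finset X) ∈ blocksOf star :=
  ⟨p, q, star p q, h, (sq_ne_fst hq h).symm, (sq_ne_snd hq h).symm, rfl, rfl⟩

lemma block_third (hq : IsSteinerQuasigroup star) {T : Finset X}
    (hT : T ∈ blocksOf star) {p q : X} (hp : p ∈ T) (hq' : q ∈ T) (hpq : p ≠ q) :
    T = {p, q, star p q} := by
  obtain ⟨a, b, c, hab, hac, hbc, rfl, habc⟩ := hT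
  have p1 : star a b = c := habc
  have p2 : star b a = c := by rw [hq.2.1]; exact habc
  have p3 : star b c = a := by rw [← p2, hq.2.2]
  have p4 : star c b = a := by rw [hq.2.1]; exact p3
  have p5 : star a c = b := by rw [← p1, hq.2.2]
  have p6 : star c a = b := by rw [hq.2.1]; exact p5
  simp only [Finset.mem_insert, Finset.mem_singleton] at hp hq'
  rcases hp with rfl | rfl | rfl <;> rcases hq' with rfl | rfl | rfl <;>
      first
        | exact absurd rfl hpq
        | (simp only [p1, p2, p3, p4, p5, p6]
           try (apply Finset.ext
                intro x
                simp only [Finset.mem_insert, Finset.mem_singleton]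
                tauto))

lemma card_mem_BSet (hq : IsSteinerQuasigroup star) {T : Finset X}
    (hT : T ∈ BSet star) : T.card = 3 := by
  obtain ⟨x, y, z, hxy, hxz, hyz, rfl⟩ := hT
  refine Finset.card_eq_three.mpr ⟨_, _, _, ?_, ?_, ?_, rfl⟩
  · exact sq_img_ne hq hxz
  · exact sq_img_ne' hq hyz
  · exact sq_img_ne hq (fun h => hxy h.symm)

lemma ASet_sub_BSet {T : Finset X} (hT : T ∈ ASet star) : T ∈ BSet star := by
  obtain ⟨a, b, c, h1, h2, h3, _, h5⟩ := hT
  exact ⟨a, b, c, h1, h2, h3, h5⟩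

lemma blocks_sub_BSet (hq : IsSteinerQuasigroup star) {T : Finset X}
    (hT : T ∈ blocksOf star) : T ∈ BSet star := by
  obtain ⟨a, b, c, hab, hac, hbc, rfl, habc⟩ := hT
  have p3 : star b c = a := by rw [← habc, hq.2.1 a b, hq.2.2]
  have p6 : star c a = b := by
    rw [hq.2.1, ← habc, hq.2.2]
  refine ⟨a, b, c, hab, hac, hbc, ?_⟩
  rw [habc, p3, p6]
  apply Finset.ext; intro x
  simp only [Finset.mem_insert, Finset.mem_singleton]
  tauto

/-- The key construction: for `b ∉ {p, q, p⋆q}`, the triple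
`{p, q, (b⋆q)⋆(b⋆p)}` lies in `A`. -/
lemma mem_ASet_aux (hq : IsSteinerQuasigroup star) {p q b : X}
    (hpq : p ≠ q) (hbp : b ≠ p) (hbq : b ≠ q) (hbs : b ≠ star p q) :
    ({p, q, star (star b q) (star b p)} : Finset X) ∈ ASet star := by
  have hxb : star b p ≠ b := sq_ne_fst hq hbp
  have hzb : star b q ≠ b := sq_ne_fst hq hbq
  have hxz : star b p ≠ star b q := fun h => hpq (sq_cancel hq h)
  refine ⟨star b p, b, star b q, hxb, hxz, fun h => hzb h.symm, ?_, ?_⟩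
  · intro hbl
    have h3 := block_third hq hbl (p := star b p) (q := b)
      (by simp) (by simp) hxb
    have hmem : star b q ∈ ({star b p, b, star (star b p) b} : Finset X) := by
      rw [← h3]; simp
    rw [hq.2.1 (star b p) b, hq.2.2] at hmem
    simp only [Finset.mem_insert, Finset.mem_singleton] at hmem
    rcases hmem with h | h | h
    · exact hxz h.symm
    · exact hzb h
    · -- star b q = p ⇒ b = star p q
      apply hbs
      have : q = star b p := by rw [← h, hq.2.2]
      rw [this, hq.2.1 b p, hq.2.2]
  · have e1 : star (star b p) b = p := by rw [hq.2.1, hq.2.2]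
    have e2 : star b (star b q) = q := hq.2.2 b q
    rw [e1, e2]

/-- `(b⋆q)⋆(b⋆p) ∉ {p, q}` when `b ∉ {p,q}` and `p ≠ q`. -/
lemma aux_g_ne (hq : IsSteinerQuasigroup star) {p q b : X}
    (hpq : p ≠ q) (hbp : b ≠ p) (hbq : b ≠ q) :
    star (star b q) (star b p) ≠ p ∧ star (star b q) (star b p) ≠ q := by
  constructor
  · intro h
    have e1 : star (star b p) b = p := by rw [hq.2.1, hq.2.2]
    have h2 : star (star b q) (star b p) = star (star b p) b := h.trans e1.symm
    rw [hq.2.1 (star b q) (star b p)] at h2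
    exact sq_ne_fst hq hbq (sq_cancel hq h2)
  · intro h
    have e2 : star (star b q) b = q := by rw [hq.2.1, hq.2.2]
    have h2 : star (star b q) (star b p) = star (star b q) b := h.trans e2.symm
    exact sq_ne_fst hq hbp (sq_cancel hq h2)

end Helpers

section Counting

variable {X : Type*} [Fintype X] [DecidableEq X]

lemma exists_outside (hn : 3 < Fintype.card X) (a b c : X) :
    ∃ e : X, e ≠ a ∧ e ≠ b ∧ e ≠ c := by
  by_contra h
  push_neg at h
  have hsub : (Finset.univ : Finset X) ⊆ {a, b, c} := by
    intro x _
    simp only [Finset.mem_insert, Finset.mem_singleton]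
    by_cases h1 : x = a
    · exact Or.inl h1
    by_cases h2 : x = b
    · exact Or.inr (Or.inl h2)
    exact Or.inr (Or.inr (h x h1 h2))
  have hle := Finset.card_le_card hsub
  have h1 := Finset.card_insert_le a ({b, c} : Finset X)
  have h2 := Finset.card_insert_le b ({c} : Finset X)
  have h3 : ({c} : Finset X).card = 1 := Finset.card_singleton c
  rw [Finset.card_univ] at hle
  omega

/-- The key double-counting lemma: a family of `3`-sets covering every pair,
with `3·|F| = C(n,2)`, covers every pair exactly once. -/
lemma count_key (F : Finset (Finset X))
    (h3 : ∀ T ∈ F, T.card = 3)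
    (hcov : ∀ p q : X, p ≠ q → ∃ T ∈ F, p ∈ T ∧ q ∈ T)
    (hc : 3 * F.card = (Fintype.card X).choose 2) :
    ∀ T ∈ F, ∀ T' ∈ F, ∀ p q : X, p ≠ q →
      p ∈ T → q ∈ T → p ∈ T' → q ∈ T' → T = T' := by
  intro T hT T' hT' p q hpq hpT hqT hpT' hqT'
  by_contra hne
  classical
  set U := F.biUnion (fun T => T.powersetCard 2) with hU
  have hsum : ∀ G : Finset (Finset X), G ⊆ F →
      (G.biUnion (fun T => T.powersetCard 2)).card ≤ 3 * G.card := by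
    intro G hG
    refine (Finset.card_biUnion_le).trans ?_
    have : ∀ T ∈ G, (T.powersetCard 2).card = 3 := by
      intro T hTG
      rw [Finset.card_powersetCard, h3 T (hG hTG)]
      rfl
    rw [Finset.sum_congr rfl this, Finset.sum_const, smul_eq_mul, mul_comm]
  have hPU : (Finset.univ.powersetCard 2 : Finset (Finset X)) ⊆ U := by
    intro s hs
    rw [Finset.mem_powersetCard] at hs
    obtain ⟨x, y, hxy, rfl⟩ := Finset.card_eq_two.mp hs.2
    obtain ⟨T₀, hT₀, hx, hy⟩ := hcov x y hxy
    refine Finset.mem_biUnion.mpr ⟨T₀, hT₀, Finset.mem_powersetCard.mpr ⟨?_, hs.2⟩⟩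
    intro z hz
    simp only [Finset.mem_insert, Finset.mem_singleton] at hz
    rcases hz with rfl | rfl
    · exact hx
    · exact hy
  have h1 : (Fintype.card X).choose 2 ≤ U.card := by
    have := Finset.card_le_card hPU
    rwa [Finset.card_powersetCard, Finset.card_univ] at this
  -- now strict upper bound
  have hpqcard : ({p, q} : Finset X).card = 2 := by
    rw [Finset.card_insert_of_notMem (by simpa using hpq), Finset.card_singleton]
  have hTe : T ∈ F.erase T' := Finset.mem_erase.mpr ⟨hne, hT⟩
  have hpq_mem : ({p, q} : Finset X) ∈ (F.erase T').biUnion (fun T => T.powersetCard 2) := by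
    refine Finset.mem_biUnion.mpr ⟨T, hTe, Finset.mem_powersetCard.mpr ⟨?_, hpqcard⟩⟩
    intro z hz
    simp only [Finset.mem_insert, Finset.mem_singleton] at hz
    rcases hz with rfl | rfl
    · exact hpT
    · exact hqT
  have hsplit : U ⊆ (F.erase T').biUnion (fun T => T.powersetCard 2) ∪
      ((T'.powersetCard 2).erase {p, q}) := by
    intro s hs
    rw [hU, Finset.mem_biUnion] at hs
    obtain ⟨T₁, hT₁, hs₁⟩ := hs
    by_cases h' : T₁ = T'
    · subst h'
      by_cases hspq : s = ({p, q} : Finset X)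
      · exact Finset.mem_union_left _ (hspq ▸ hpq_mem)
      · exact Finset.mem_union_right _ (Finset.mem_erase.mpr ⟨hspq, hs₁⟩)
    · exact Finset.mem_union_left _
        (Finset.mem_biUnion.mpr ⟨T₁, Finset.mem_erase.mpr ⟨h', hT₁⟩, hs₁⟩)
  have h2 : U.card ≤ 3 * (F.erase T').card + 2 := by
    refine (Finset.card_le_card hsplit).trans ?_
    refine (Finset.card_union_le _ _).trans ?_
    have hE : ((T'.powersetCard 2).erase {p, q}).card ≤ 2 := by
      have hmem : ({p, q} : Finset X) ∈ T'.powersetCard 2 := by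
        refine Finset.mem_powersetCard.mpr ⟨?_, hpqcard⟩
        intro z hz
        simp only [Finset.mem_insert, Finset.mem_singleton] at hz
        rcases hz with rfl | rfl
        · exact hpT'
        · exact hqT'
      have := Finset.card_erase_of_mem hmem
      rw [this, Finset.card_powersetCard, h3 T' hT']
      norm_num
    have := hsum (F.erase T') (Finset.erase_subset _ _)
    omega
  have hF1 : 1 ≤ F.card := Finset.card_pos.mpr ⟨T, hT⟩
  have hE : (F.erase T').card = F.card - 1 := Finset.card_erase_of_mem hT'
  omega

end Counting

section Structure

variable {X : Type*} [Fintype X] [DecidableEq X] {star : X → X → X}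

lemma A_sub_blocks (hq : IsSteinerQuasigroup star) (hn : 3 < Fintype.card X)
    (huniq : ∀ T ∈ ASet star, ∀ T' ∈ ASet star, ∀ p q : X, p ≠ q →
      p ∈ T → q ∈ T → p ∈ T' → q ∈ T' → T = T') :
    ASet star ⊆ blocksOf star := by
  intro T hT
  have h3 := card_mem_BSet hq (ASet_sub_BSet hT)
  obtain ⟨p, q, r, hpq, hpr, hqr, rfl⟩ := Finset.card_eq_three.mp h3
  obtain ⟨b, hbp, hbq, hbs⟩ := exists_outside hn p q (star p q)
  have hmem : ({p, q, star (star b q) (star b p)} : Finset X) ∈ ASet star :=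
    mem_ASet_aux hq hpq hbp hbq hbs
  have hTw : ({p, q, r} : Finset X) = {p, q, star (star b q) (star b p)} :=
    huniq _ hT _ hmem p q hpq (by simp) (by simp) (by simp) (by simp)
  set w := star (star b q) (star b p) with hw
  by_cases hwpq : w = star p q
  · rw [hTw, hwpq]
    exact block_mk hq hpq
  · exfalso
    obtain ⟨hwp, hwq⟩ := aux_g_ne hq hpq hbp hbq
    rw [← hw] at hwp hwq
    have hyp : star w p ≠ p := sq_ne_snd hq hwp
    have hyq : star w p ≠ q := by
      intro h
      apply hwpq
      have h2 : star p q = star p (star w p) := by rw [h]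
      rw [hq.2.1 w p, hq.2.2] at h2
      exact h2.symm
    have hys : star w p ≠ star p q := by
      intro h
      apply hwq
      have h2 : star p (star w p) = star p (star p q) := by rw [h]
      rw [hq.2.1 w p, hq.2.2, hq.2.2] at h2
      exact h2
    have hmem2 : ({p, q, star (star (star w p) q) (star (star w p) p)} : Finset X) ∈ ASet star :=
      mem_ASet_aux hq hpq hyp hyq hys
    have heq : ({p, q, star (star (star w p) q) (star (star w p) p)} : Finset X) = {p, q, w} :=
      huniq _ hmem2 _ hmem p q hpq (by simp) (by simp) (by simp) (by simp)
    obtain ⟨hgp, hgq⟩ := aux_g_ne hq hpq hyp hyq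
    have hgw : star (star (star w p) q) (star (star w p) p) = w := by
      have hmem3 : star (star (star w p) q) (star (star w p) p) ∈ ({p, q, w} : Finset X) := by
        rw [← heq]; simp
      simp only [Finset.mem_insert, Finset.mem_singleton] at hmem3
      tauto
    have hyp2 : star (star w p) p = w := by
      rw [hq.2.1 (star w p) p, hq.2.1 w p, hq.2.2]
    rw [hyp2] at hgw
    have hyqw : star (star w p) q = w := by
      have h2 := congrArg (star w) hgw
      rw [hq.2.1 (star (star w p) q) w, hq.2.2, hq.1] at h2
      exact h2
    exact hpq (sq_cancel hq (hyp2.trans hyqw.symm))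

lemma blocks_sub_A (hq : IsSteinerQuasigroup star) (hn : 3 < Fintype.card X)
    (hAS : ASet star ⊆ blocksOf star) :
    blocksOf star ⊆ ASet star := by
  intro T hT
  obtain ⟨a, b, c, hab, hac, hbc, rfl, habc⟩ := hT
  obtain ⟨e, hea, heb, hec⟩ := exists_outside hn a b c
  have hec' : e ≠ star a b := by rw [habc]; exact hec
  have hmem : ({a, b, star (star e b) (star e a)} : Finset X) ∈ ASet star :=
    mem_ASet_aux hq hab hea heb hec'
  have hbl := hAS hmem
  have h3 := block_third hq hbl (p := a) (q := b) (by simp) (by simp) hab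
  rw [h3, habc] at hmem
  exact hmem

lemma BSet_sub_blocks (hq : IsSteinerQuasigroup star)
    (hAS : ASet star ⊆ blocksOf star) :
    BSet star ⊆ blocksOf star := by
  intro T hT
  obtain ⟨x, y, z, hxy, hxz, hyz, rfl⟩ := hT
  by_cases hb : ({x, y, z} : Finset X) ∈ blocksOf star
  · have h3 := block_third hq hb (p := x) (q := y) (by simp) (by simp) hxy
    have hz : z = star x y := by
      have hmz : z ∈ ({x, y, star x y} : Finset X) := h3 ▸ (by simp)
      simp only [Finset.mem_insert, Finset.mem_singleton] at hmz
      rcases hmz with h | h | h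
      · exact absurd h.symm hxz
      · exact absurd h.symm hyz
      · exact h
    have e1 : star y z = x := by rw [hz, hq.2.1 x y, hq.2.2]
    have e2 : star z x = y := by rw [hz, hq.2.1 (star x y) x, hq.2.2]
    have hset : ({star x y, star y z, star z x} : Finset X) = {x, y, z} := by
      rw [e1, e2, ← hz]
      apply Finset.ext; intro t
      simp only [Finset.mem_insert, Finset.mem_singleton]
      tauto
    rw [hset]; exact hb
  · exact hAS ⟨x, y, z, hxy, hxz, hyz, hb, rfl⟩

end Structure

/-- `β(S) = (1/3)·C(n,2)` iff `α(S) = (1/3)·C(n,2)`. -/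
theorem stmt4 {X : Type*} [Fintype X] [DecidableEq X]
    (star : X → X → X) (hq : IsSteinerQuasigroup star)
    (n : ℕ) (hcard : Fintype.card X = n) (hn : 3 < n) :
    3 * betaInv star = n.choose 2 ↔ 3 * alphaInv star = n.choose 2 := by
  subst hcard
  have hBfin := Set.toFinite (BSet star)
  have hAfin := Set.toFinite (ASet star)
  constructor
  · intro h
    have hc : 3 * hBfin.toFinset.card = (Fintype.card X).choose 2 := by
      rw [← Set.ncard_eq_toFinset_card _ hBfin]; exact h
    have huniq := count_key hBfin.toFinset
      (fun T hT => card_mem_BSet hq (hBfin.mem_toFinset.mp hT))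
      (fun p q hpq => ⟨{p, q, star p q},
        hBfin.mem_toFinset.mpr (blocks_sub_BSet hq (block_mk hq hpq)),
        by simp, by simp⟩) hc
    have hBS : BSet star ⊆ blocksOf star := by
      intro T hT
      obtain ⟨p, q, r, hpq, hpr, hqr, rfl⟩ :=
        Finset.card_eq_three.mp (card_mem_BSet hq hT)
      have hbl := block_mk hq hpq
      have heq := huniq _ (hBfin.mem_toFinset.mpr hT) _
        (hBfin.mem_toFinset.mpr (blocks_sub_BSet hq hbl)) p q hpq
        (by simp) (by simp) (by simp) (by simp)
      rw [heq]; exact hbl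
    have hAS : ASet star ⊆ blocksOf star := fun T hT => hBS (ASet_sub_BSet hT)
    have hSA := blocks_sub_A hq hn hAS
    have hset : ASet star = BSet star :=
      Set.Subset.antisymm (fun T hT => ASet_sub_BSet hT) (fun T hT => hSA (hBS hT))
    unfold alphaInv
    unfold betaInv at h
    rw [hset]; exact h
  · intro h
    have hc : 3 * hAfin.toFinset.card = (Fintype.card X).choose 2 := by
      rw [← Set.ncard_eq_toFinset_card _ hAfin]; exact h
    have hcov : ∀ p q : X, p ≠ q → ∃ T ∈ hAfin.toFinset, p ∈ T ∧ q ∈ T := by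
      intro p q hpq
      obtain ⟨b, hbp, hbq, hbs⟩ := exists_outside hn p q (star p q)
      exact ⟨_, hAfin.mem_toFinset.mpr (mem_ASet_aux hq hpq hbp hbq hbs),
        by simp, by simp⟩
    have huniq := count_key hAfin.toFinset
      (fun T hT => card_mem_BSet hq (ASet_sub_BSet (hAfin.mem_toFinset.mp hT))) hcov hc
    have hAS := A_sub_blocks hq hn (fun T hT T' hT' =>
      huniq T (hAfin.mem_toFinset.mpr hT) T' (hAfin.mem_toFinset.mpr hT'))
    have hSA := blocks_sub_A hq hn hAS
    have hBS := BSet_sub_blocks hq hAS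
    have hset : ASet star = BSet star :=
      Set.Subset.antisymm (fun T hT => ASet_sub_BSet hT) (fun T hT => hSA (hBS hT))
    unfold betaInv
    unfold alphaInv at h
    rw [← hset]; exact h
end

section
/- Let S be a Steiner triple system of order n with n > 3. If α(S) = (1/3)·C(n,2), then the number of pasch configurations contained in S equals n(n−1)(n−3)/24. -/
/-!
Every pair `{x, y}` lies in a member of `A(S)`: it is the image of the triangle
`(b ⋆ x, b, b ⋆ y)` for any `b ∉ {x, y, x ⋆ y}`. Members of `A(S)` are triples, so
`3 α(S) = C(n, 2)` forces every pair into exactly one of them. It follows that every block lies in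
`A(S)`, and then that the image `{a ⋆ b, b ⋆ c, c ⋆ a}` of a triangle which is not a block, sharing
the pair `a ⋆ b, b ⋆ c` with a block in `A(S)`, is itself a block. So every triple `(a, b, d)` with
`a ≠ b` and `d ∉ {a, b, a ⋆ b}` spans the pasch configuration with blocks `{a, b, a ⋆ b}`,
`{a, d, a ⋆ d}`, `{b, d, b ⋆ d}`, `{a ⋆ b, a ⋆ d, b ⋆ d}`. There are `n (n - 1) (n - 3)` such
triples, and each configuration comes from `4! = 24` of them, one per ordering of its blocks.
-/

open Finset Function

theorem Finset.eq_of_subset_of_card_mul_choose_eq {α : Type*} [Fintype α] [DecidableEq α]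
    {𝒜 : Finset (Finset α)} {k t : ℕ} (hk : ∀ T ∈ 𝒜, #T = k)
    (hcover : ∀ p : Finset α, #p = t → ∃ T ∈ 𝒜, p ⊆ T)
    (hcard : #𝒜 * k.choose t = (Fintype.card α).choose t)
    {p T₁ T₂ : Finset α} (hp : #p = t) (h₁ : T₁ ∈ 𝒜) (h₂ : T₂ ∈ 𝒜) (hp₁ : p ⊆ T₁)
    (hp₂ : p ⊆ T₂) : T₁ = T₂ := by
  set S := (univ : Finset α).powersetCard t
  have hbelow : ∀ T ∈ 𝒜, #(S.bipartiteBelow (· ⊆ ·) T) = k.choose t := by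
    intro T hT
    have : S.bipartiteBelow (· ⊆ ·) T = T.powersetCard t := by
      ext q; simp [S, bipartiteBelow, and_comm]
    rw [this, card_powersetCard, hk T hT]
  have hsum : ∑ q ∈ S, #(𝒜.bipartiteAbove (· ⊆ ·) q) = ∑ q ∈ S, 1 := by
    rw [sum_card_bipartiteAbove_eq_sum_card_bipartiteBelow, sum_congr rfl hbelow, sum_const,
      smul_eq_mul, hcard, sum_const, smul_eq_mul, mul_one, card_powersetCard, card_univ]
  have hone := (sum_eq_sum_iff_of_le fun q hq => ?_).1 hsum.symm p (by simp [S, hp])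
  · exact card_le_one.1 hone.symm.le _ (by simp [bipartiteAbove, h₁, hp₁]) _
      (by simp [bipartiteAbove, h₂, hp₂])
  · obtain ⟨T, hT, hqT⟩ := hcover q (mem_powersetCard.1 hq).2
    exact card_pos.2 ⟨T, by simp [bipartiteAbove, hT, hqT]⟩

lemma exists_ne_ne_ne {X : Type*} [Fintype X] [DecidableEq X] (hX : 3 < Fintype.card X)
    (x y z : X) : ∃ b, b ≠ x ∧ b ≠ y ∧ b ≠ z := by
  obtain ⟨b, -, hb⟩ := exists_mem_notMem_of_card_lt_card (s := {x, y, z}) (t := univ)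
    (card_le_three.trans_lt (by rwa [card_univ]))
  simp only [mem_insert, mem_singleton, not_or] at hb
  exact ⟨b, hb⟩

namespace IsSteinerQuasigroup

variable {X : Type*} {star : X → X → X}

lemma star_self (hq : IsSteinerQuasigroup star) (a : X) : star a a = a := hq.1 a

lemma comm (hq : IsSteinerQuasigroup star) (a b : X) : star a b = star b a := hq.2.1 a b

lemma star_star (hq : IsSteinerQuasigroup star) (a b : X) : star a (star a b) = b := hq.2.2 a b

lemma injective_star (hq : IsSteinerQuasigroup star) (a : X) : Injective (star a) :=
  LeftInverse.injective (hq.star_star a)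

lemma star_eq_iff (hq : IsSteinerQuasigroup star) {a b c : X} : star a b = c ↔ star a c = b :=
  ⟨fun h => h ▸ hq.star_star a b, fun h => h ▸ hq.star_star a c⟩

lemma star_ne_left (hq : IsSteinerQuasigroup star) {a b : X} (hab : a ≠ b) : star a b ≠ a := by
  intro h
  have := hq.star_star a b
  rw [h, hq.star_self] at this
  exact hab this

lemma star_ne_right (hq : IsSteinerQuasigroup star) {a b : X} (hab : a ≠ b) : star a b ≠ b := by
  rw [hq.comm]; exact hq.star_ne_left hab.symm

lemma star_ne_star (hq : IsSteinerQuasigroup star) {a c : X} (hac : a ≠ c) (b : X) :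
    star a b ≠ star b c := by
  rw [hq.comm]; exact (hq.injective_star b).ne hac

variable [DecidableEq X]

lemma star_mem_of_mem_blocksOf (hq : IsSteinerQuasigroup star) {B : Finset X}
    (hB : B ∈ blocksOf star) {a b : X} (ha : a ∈ B) (hb : b ∈ B) : star a b ∈ B := by
  obtain ⟨x, y, z, -, -, -, rfl, rfl⟩ := hB
  simp only [mem_insert, mem_singleton] at ha hb
  rcases ha with rfl | rfl | rfl <;> rcases hb with rfl | rfl | rfl <;>
    simp [hq.star_self, hq.star_star, hq.comm]

lemma mem_blocksOf_iff (hq : IsSteinerQuasigroup star) {a b c : X} (hab : a ≠ b) (hac : a ≠ c)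
    (hbc : b ≠ c) : ({a, b, c} : Finset X) ∈ blocksOf star ↔ star a b = c := by
  refine ⟨fun hB => ?_, fun h => ⟨a, b, c, hab, hac, hbc, rfl, h⟩⟩
  have := hq.star_mem_of_mem_blocksOf hB (a := a) (b := b) (by simp) (by simp)
  simpa [hq.star_ne_left hab, hq.star_ne_right hab] using this

lemma insert_star_mem_blocksOf (hq : IsSteinerQuasigroup star) {a b : X} (hab : a ≠ b) :
    ({a, b, star a b} : Finset X) ∈ blocksOf star :=
  ⟨a, b, star a b, hab, (hq.star_ne_left hab).symm, (hq.star_ne_right hab).symm, rfl, rfl⟩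

lemma card_of_mem_ASet (hq : IsSteinerQuasigroup star) {T : Finset X} (hT : T ∈ ASet star) :
    #T = 3 := by
  obtain ⟨a, b, c, hab, hac, hbc, -, rfl⟩ := hT
  exact card_eq_three.2 ⟨_, _, _, hq.star_ne_star hac b, (hq.star_ne_star hbc.symm a).symm,
    hq.star_ne_star hab.symm c, rfl⟩

lemma insert_star_star_mem_ASet (hq : IsSteinerQuasigroup star) {x y b : X} (hxy : x ≠ y)
    (hbx : b ≠ x) (hby : b ≠ y) (hb : b ≠ star x y) :
    ({x, y, star (star b y) (star b x)} : Finset X) ∈ ASet star ∧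
      star (star b y) (star b x) ≠ x ∧ star (star b y) (star b x) ≠ y := by
  have hx : star (star b x) b = x := by rw [hq.comm, hq.star_star]
  have hy : star (star b y) b = y := by rw [hq.comm, hq.star_star]
  have hab : star b x ≠ b := hq.star_ne_left hbx
  have hbc : b ≠ star b y := (hq.star_ne_left hby).symm
  have hac : star b x ≠ star b y := (hq.injective_star b).ne hxy
  refine ⟨⟨star b x, b, star b y, hab, hac, hbc, ?_, by rw [hx, hq.star_star]⟩, ?_, ?_⟩
  · rw [hq.mem_blocksOf_iff hab hac hbc, hx, eq_comm, hq.star_eq_iff, hq.comm, hq.star_eq_iff]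
    exact hb.symm
  · simpa [hx] using hq.star_ne_star hbc.symm (star b x)
  · simpa [hy] using (hq.injective_star (star b y)).ne hab

end IsSteinerQuasigroup

def IsPartialLinearSpace {X : Type*} (𝒜 : Set (Finset X)) : Prop :=
  ∀ ⦃x y : X⦄, x ≠ y → ∀ ⦃T₁ T₂ : Finset X⦄, T₁ ∈ 𝒜 → T₂ ∈ 𝒜 →
    x ∈ T₁ → y ∈ T₁ → x ∈ T₂ → y ∈ T₂ → T₁ = T₂

def TriangleImagesAreBlocks {X : Type*} [DecidableEq X] (star : X → X → X) : Prop :=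
  ∀ a b c : X, a ≠ b → a ≠ c → b ≠ c → ({a, b, c} : Finset X) ∉ blocksOf star →
    ({star a b, star b c, star c a} : Finset X) ∈ blocksOf star

section ASet

variable {X : Type*} [Fintype X] [DecidableEq X] {star : X → X → X}

lemma isPartialLinearSpace_ASet (hq : IsSteinerQuasigroup star) (hX : 3 < Fintype.card X)
    (ha : 3 * alphaInv star = (Fintype.card X).choose 2) : IsPartialLinearSpace (ASet star) := by
  intro x y hxy T₁ T₂ h₁ h₂ hx₁ hy₁ hx₂ hy₂
  have hfin := Set.toFinite (ASet star)
  refine eq_of_subset_of_card_mul_choose_eq (𝒜 := hfin.toFinset) (k := 3) (t := 2)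
    (fun T hT => hq.card_of_mem_ASet (hfin.mem_toFinset.1 hT)) ?_ ?_ (card_pair hxy)
    (hfin.mem_toFinset.2 h₁) (hfin.mem_toFinset.2 h₂) (by simp [insert_subset_iff, hx₁, hy₁])
    (by simp [insert_subset_iff, hx₂, hy₂])
  · intro p hp
    obtain ⟨u, w, huw, rfl⟩ := card_eq_two.1 hp
    obtain ⟨b, hbu, hbw, hb⟩ := exists_ne_ne_ne hX u w (star u w)
    exact ⟨_, hfin.mem_toFinset.2 (hq.insert_star_star_mem_ASet huw hbu hbw hb).1,
      by simp [insert_subset_iff]⟩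
  · rw [← ha, alphaInv, Set.ncard_eq_toFinset_card _ hfin, mul_comm]
    rfl

/-- If the member of `A(S)` through `p, q` were `{p, q, w}` with `w ≠ p ⋆ q`, covering the same
pair from `w` instead of `b` would give it again, and this forces `w = p ⋆ q`. -/
lemma insert_star_mem_ASet (hq : IsSteinerQuasigroup star) (hX : 3 < Fintype.card X)
    (hL : IsPartialLinearSpace (ASet star)) {p q : X} (hpq : p ≠ q) :
    ({p, q, star p q} : Finset X) ∈ ASet star := by
  obtain ⟨b, hbp, hbq, hb⟩ := exists_ne_ne_ne hX p q (star p q)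
  obtain ⟨hT, hwp, hwq⟩ := hq.insert_star_star_mem_ASet hpq hbp hbq hb
  set w := star (star b q) (star b p)
  by_contra hpqw
  have hw : w ≠ star p q := fun h => hpqw (h ▸ hT)
  obtain ⟨hT', -, -⟩ := hq.insert_star_star_mem_ASet hpq hwp hwq hw
  have heq := hL hpq hT hT' (by simp) (by simp) (by simp) (by simp)
  have hww' : star (star w q) (star w p) = w := by
    have : w ∈ ({p, q, star (star w q) (star w p)} : Finset X) := heq ▸ by simp
    simp only [mem_insert, mem_singleton] at this
    exact (this.resolve_left hwp).resolve_left hwq |>.symm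
  have hpw : star p w = q := by
    rw [hq.comm, ← hq.star_eq_iff.1 hww', hq.comm, hq.star_star]
  exact hw (hq.star_eq_iff.1 hpw).symm

lemma triangleImagesAreBlocks (hq : IsSteinerQuasigroup star) (hX : 3 < Fintype.card X)
    (hL : IsPartialLinearSpace (ASet star)) : TriangleImagesAreBlocks star := by
  intro a b c hab hac hbc hnb
  have hne := hq.star_ne_star hac b
  have hT : ({star a b, star b c, star c a} : Finset X) ∈ ASet star :=
    ⟨a, b, c, hab, hac, hbc, hnb, rfl⟩
  rw [hL hne hT (insert_star_mem_ASet hq hX hL hne) (by simp) (by simp) (by simp) (by simp)]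
  exact hq.insert_star_mem_blocksOf hne

end ASet

namespace PaschTuple

variable {X : Type*}

/-- A pasch tuple `v : Fin 6 → X` has four blocks, any two of which meet in one point;
`v (pairIndex i j)` is the point shared by blocks `i` and `j` (the diagonal values are junk). -/
def pairIndex : Fin 4 → Fin 4 → Fin 6 :=
  ![![0, 0, 1, 2], ![0, 0, 3, 4], ![1, 3, 1, 5], ![2, 4, 5, 2]]

def ends : Fin 6 → Fin 4 × Fin 4 :=
  ![(0, 1), (0, 2), (0, 3), (1, 2), (1, 3), (2, 3)]

lemma pairIndex_comm (i j : Fin 4) : pairIndex i j = pairIndex j i := by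
  revert i j; decide

lemma pairIndex_eq_pairIndex {i j k l : Fin 4} (hij : i ≠ j) (hkl : k ≠ l)
    (h : pairIndex i j = pairIndex k l) : i = k ∧ j = l ∨ i = l ∧ j = k := by
  revert i j k l; decide

lemma pairIndex_ends (m : Fin 6) : pairIndex (ends m).1 (ends m).2 = m := by
  revert m; decide

lemma ends_ne (m : Fin 6) : (ends m).1 ≠ (ends m).2 := by
  revert m; decide

def reindex (σ : Equiv.Perm (Fin 4)) (v : Fin 6 → X) : Fin 6 → X :=
  fun m => v (pairIndex (σ (ends m).1) (σ (ends m).2))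

lemma reindex_pairIndex (σ : Equiv.Perm (Fin 4)) (v : Fin 6 → X) {i j : Fin 4} (hij : i ≠ j) :
    reindex σ v (pairIndex i j) = v (pairIndex (σ i) (σ j)) := by
  rcases pairIndex_eq_pairIndex (ends_ne _) hij (pairIndex_ends (pairIndex i j)) with
    ⟨h₁, h₂⟩ | ⟨h₁, h₂⟩ <;> simp only [reindex, h₁, h₂, pairIndex_comm (σ j)]

lemma injective_reindex (σ : Equiv.Perm (Fin 4)) {v : Fin 6 → X} (hv : Injective v) :
    Injective (reindex σ v) := by
  intro m m' h
  rw [← pairIndex_ends m, ← pairIndex_ends m']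
  rcases pairIndex_eq_pairIndex (σ.injective.ne (ends_ne m)) (σ.injective.ne (ends_ne m'))
    (hv h) with ⟨h₁, h₂⟩ | ⟨h₁, h₂⟩
  · rw [σ.injective h₁, σ.injective h₂]
  · rw [σ.injective h₁, σ.injective h₂, pairIndex_comm]

variable [DecidableEq X]

def block (v : Fin 6 → X) : Fin 4 → Finset X :=
  ![{v 0, v 1, v 2}, {v 0, v 3, v 4}, {v 5, v 1, v 3}, {v 5, v 2, v 4}]

lemma mem_block {v : Fin 6 → X} {i : Fin 4} {x : X} :
    x ∈ block v i ↔ ∃ j ≠ i, v (pairIndex i j) = x := by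
  fin_cases i <;> simp [block, pairIndex, Fin.exists_fin_succ, eq_comm, or_comm, or_assoc]

lemma block_eq_image (v : Fin 6 → X) (i : Fin 4) :
    block v i = (univ.erase i).image (fun j => v (pairIndex i j)) := by
  ext x
  simp [mem_block]

lemma range_block (v : Fin 6 → X) : Set.range (block v) =
    {{v 0, v 1, v 2}, {v 0, v 3, v 4}, {v 5, v 1, v 3}, {v 5, v 2, v 4}} := by
  simp only [block, Matrix.range_cons, Matrix.range_empty, Set.union_empty, Set.singleton_union]

lemma block_reindex (σ : Equiv.Perm (Fin 4)) (v : Fin 6 → X) (i : Fin 4) :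
    block (reindex σ v) i = block v (σ i) := by
  simp only [block_eq_image]
  calc (univ.erase i).image (fun j => reindex σ v (pairIndex i j))
      = (univ.erase i).image (fun j => v (pairIndex (σ i) (σ j))) :=
        image_congr fun j hj => reindex_pairIndex σ v (ne_of_mem_erase hj).symm
    _ = ((univ.erase i).image σ).image (fun j => v (pairIndex (σ i) j)) := by
        rw [image_image]; rfl
    _ = (univ.erase (σ i)).image (fun j => v (pairIndex (σ i) j)) := by
        rw [image_erase σ.injective, image_univ_equiv]

lemma range_block_reindex (σ : Equiv.Perm (Fin 4)) (v : Fin 6 → X) :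
    Set.range (block (reindex σ v)) = Set.range (block v) := by
  rw [show block (reindex σ v) = block v ∘ σ from funext (block_reindex σ v),
    σ.surjective.range_comp]

variable {v w : Fin 6 → X}

lemma block_inter_block (hv : Injective v) {i j : Fin 4} (hij : i ≠ j) :
    block v i ∩ block v j = {v (pairIndex i j)} := by
  ext x
  simp only [mem_inter, mem_block, mem_singleton]
  constructor
  · rintro ⟨⟨k, hki, rfl⟩, l, hlj, hl⟩
    rcases pairIndex_eq_pairIndex hlj.symm hki.symm (hv hl) with ⟨hji, -⟩ | ⟨rfl, rfl⟩
    · exact absurd hji.symm hij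
    · rfl
  · rintro rfl
    exact ⟨⟨j, hij.symm, rfl⟩, i, hij, congrArg v (pairIndex_comm j i)⟩

lemma card_block (hv : Injective v) (i : Fin 4) : #(block v i) = 3 := by
  rw [block_eq_image, card_image_of_injOn, card_erase_of_mem (mem_univ i)]
  · rfl
  intro j hj k hk h
  rcases pairIndex_eq_pairIndex (ne_of_mem_erase hj).symm (ne_of_mem_erase hk).symm (hv h) with
    ⟨-, hjk⟩ | ⟨rfl, -⟩
  · exact hjk
  · exact absurd rfl (ne_of_mem_erase hk)

lemma injective_block (hv : Injective v) : Injective (block v) := by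
  intro i j h
  by_contra hij
  have := block_inter_block hv hij
  rw [h, inter_self] at this
  simpa [this] using card_block hv j

lemma eq_of_block_eq (hv : Injective v) (hw : Injective w) (h : block v = block w) : v = w := by
  funext m
  have hm := block_inter_block hv (ends_ne m)
  rw [h, block_inter_block hw (ends_ne m), pairIndex_ends, singleton_inj] at hm
  exact hm.symm

lemma exists_reindex_eq (hv : Injective v) (hw : Injective w)
    (h : Set.range (block w) = Set.range (block v)) :
    ∃ σ : Equiv.Perm (Fin 4), reindex σ v = w := by
  have hmem (i : Fin 4) : block w i ∈ Set.range (block v) := h ▸ Set.mem_range_self i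
  choose σ hσ using hmem
  have hσinj : Injective σ := fun i j hij => injective_block hw (by rw [← hσ, ← hσ, hij])
  refine ⟨Equiv.ofBijective σ hσinj.bijective_of_finite, eq_of_block_eq
    (injective_reindex _ hv) hw (funext fun i => ?_)⟩
  rw [block_reindex, Equiv.ofBijective_apply, hσ]

end PaschTuple

open PaschTuple

section PaschCount

variable {X : Type*} [DecidableEq X] {star : X → X → X}

def IsPaschTuple (star : X → X → X) (v : Fin 6 → X) : Prop :=
  Injective v ∧ ∀ i, block v i ∈ blocksOf star

lemma isPasch_and_subset_iff {P : Set (Finset X)} :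
    IsPasch P ∧ P ⊆ blocksOf star ↔ ∃ v, IsPaschTuple star v ∧ Set.range (block v) = P := by
  constructor
  · rintro ⟨⟨a, b, c, d, e, f, hdist, rfl⟩, hP⟩
    refine ⟨![a, b, c, d, e, f], ⟨List.nodup_ofFn.1 hdist, fun i => hP ?_⟩, ?_⟩
    · fin_cases i <;> simp [block]
    · simp [range_block]
  · rintro ⟨v, ⟨hv, hB⟩, rfl⟩
    refine ⟨⟨v 0, v 1, v 2, v 3, v 4, v 5, List.nodup_ofFn.2 hv, range_block v⟩, ?_⟩
    rintro _ ⟨i, rfl⟩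
    exact hB i

lemma ncard_isPaschTuple_range_block_eq {v : Fin 6 → X} (hv : IsPaschTuple star v) :
    {w | IsPaschTuple star w ∧ Set.range (block w) = Set.range (block v)}.ncard = 24 := by
  have hfiber : {w | IsPaschTuple star w ∧ Set.range (block w) = Set.range (block v)} =
      Set.range fun σ : Equiv.Perm (Fin 4) => reindex σ v := by
    ext w
    constructor
    · rintro ⟨hw, h⟩
      exact exists_reindex_eq hv.1 hw.1 h
    · rintro ⟨σ, rfl⟩
      exact ⟨⟨injective_reindex σ hv.1, fun i => block_reindex σ v i ▸ hv.2 (σ i)⟩,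
        range_block_reindex σ v⟩
  have hinj : Injective fun σ : Equiv.Perm (Fin 4) => reindex σ v := fun σ τ h =>
    Equiv.ext fun i => injective_block hv.1 (by simp only [← block_reindex, h])
  rw [hfiber, Set.ncard_range_of_injective hinj, Nat.card_perm, Nat.card_eq_fintype_card,
    Fintype.card_fin]
  rfl

lemma ncard_isPaschTuple_eq_mul_ncard_pasch [Fintype X] :
    {v | IsPaschTuple star v}.ncard = 24 * {P | IsPasch P ∧ P ⊆ blocksOf star}.ncard := by
  classical
  set G := (univ : Finset (Fin 6 → X)).filter (IsPaschTuple star)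
  have hG : {v | IsPaschTuple star v} = G := by ext; simp [G]
  have hP : {P | IsPasch P ∧ P ⊆ blocksOf star} = G.image fun v => Set.range (block v) := by
    ext; simp [G, isPasch_and_subset_iff]
  rw [hG, hP, Set.ncard_coe_finset, Set.ncard_coe_finset,
    card_eq_sum_card_image (fun v => Set.range (block v)) G, sum_const_nat, mul_comm]
  rintro _ hP
  obtain ⟨v, hv, rfl⟩ := mem_image.1 hP
  rw [← ncard_isPaschTuple_range_block_eq (mem_filter.1 hv).2, ← Set.ncard_coe_finset]
  congr 1
  ext; simp [G]

def paschTupleOf (star : X → X → X) (a b d : X) : Fin 6 → X :=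
  ![a, b, star a b, d, star a d, star b d]

lemma IsPaschTuple.paschTupleOf_eq (hq : IsSteinerQuasigroup star) {v : Fin 6 → X}
    (hv : IsPaschTuple star v) : paschTupleOf star (v 0) (v 1) (v 3) = v := by
  obtain ⟨hinj, hB⟩ := hv
  have h2 : star (v 0) (v 1) = v 2 :=
    (hq.mem_blocksOf_iff (hinj.ne (by decide)) (hinj.ne (by decide)) (hinj.ne (by decide))).1
      (hB 0)
  have h4 : star (v 0) (v 3) = v 4 :=
    (hq.mem_blocksOf_iff (hinj.ne (by decide)) (hinj.ne (by decide)) (hinj.ne (by decide))).1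
      (hB 1)
  have h5 : star (v 5) (v 1) = v 3 :=
    (hq.mem_blocksOf_iff (hinj.ne (by decide)) (hinj.ne (by decide)) (hinj.ne (by decide))).1
      (hB 2)
  rw [hq.comm, hq.star_eq_iff] at h5
  funext m
  fin_cases m <;> simp [paschTupleOf, h2, h4, h5]

lemma isPaschTuple_paschTupleOf (hq : IsSteinerQuasigroup star)
    (hP : TriangleImagesAreBlocks star) {a b d : X} (hab : a ≠ b)
    (hd : d ∉ ({a, b, star a b} : Finset X)) : IsPaschTuple star (paschTupleOf star a b d) := by
  simp only [mem_insert, mem_singleton, not_or] at hd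
  obtain ⟨hda, hdb, hdab⟩ := hd
  have hinj : Injective (paschTupleOf star a b d) := by
    have hcancel : ∀ x y z, star x y = star x z → y = z := fun x _ _ h => hq.injective_star x h
    have hcomm := hq.comm
    have hss := hq.star_star
    have hself := hq.star_self
    rw [← List.nodup_ofFn]
    show List.Nodup [a, b, star a b, d, star a d, star b d]
    grind [List.nodup_cons]
  refine ⟨hinj, fun i => ?_⟩
  fin_cases i
  · exact hq.insert_star_mem_blocksOf hab
  · exact hq.insert_star_mem_blocksOf (Ne.symm hda)
  · exact (hq.mem_blocksOf_iff (hq.star_ne_left (Ne.symm hdb))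
      (hq.star_ne_right (Ne.symm hdb)) (Ne.symm hdb)).2 (by rw [hq.comm, hq.star_star])
  · have hnb : ({b, a, d} : Finset X) ∉ blocksOf star := by
      rw [hq.mem_blocksOf_iff hab.symm (Ne.symm hdb) (Ne.symm hda), hq.comm]
      exact Ne.symm hdab
    have := hP b a d hab.symm (Ne.symm hdb) (Ne.symm hda) hnb
    rw [hq.comm b a, hq.comm d b] at this
    show ({star b d, star a b, star a d} : Finset X) ∈ blocksOf star
    rwa [insert_comm, pair_comm]

lemma ncard_isPaschTuple [Fintype X] (hq : IsSteinerQuasigroup star)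
    (hP : TriangleImagesAreBlocks star) :
    {v | IsPaschTuple star v}.ncard =
      Fintype.card X * (Fintype.card X - 1) * (Fintype.card X - 3) := by
  set D : Finset (Σ _ : X × X, X) :=
    univ.offDiag.sigma fun p => ({p.1, p.2, star p.1 p.2} : Finset X)ᶜ
  have himage : {v | IsPaschTuple star v} =
      (fun s : Σ _ : X × X, X => paschTupleOf star s.1.1 s.1.2 s.2) '' D := by
    ext v
    constructor
    · intro hv
      have h2 := congrFun (hv.paschTupleOf_eq hq) 2
      simp only [paschTupleOf, Matrix.cons_val] at h2
      refine ⟨⟨(v 0, v 1), v 3⟩, ?_, hv.paschTupleOf_eq hq⟩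
      simp only [D, coe_sigma, Set.mem_sigma_iff, coe_offDiag, Set.mem_offDiag, coe_compl,
        Set.mem_compl_iff, mem_coe, mem_insert, mem_singleton, not_or, h2]
      exact ⟨⟨mem_univ _, mem_univ _, hv.1.ne (by decide)⟩, hv.1.ne (by decide),
        hv.1.ne (by decide), hv.1.ne (by decide)⟩
    · rintro ⟨⟨⟨a, b⟩, d⟩, hs, rfl⟩
      obtain ⟨hab, hd⟩ := mem_sigma.1 (mem_coe.1 hs)
      exact isPaschTuple_paschTupleOf hq hP (mem_offDiag.1 hab).2.2 (mem_compl.1 hd)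
  have hinj : Injective fun s : Σ _ : X × X, X => paschTupleOf star s.1.1 s.1.2 s.2 := by
    rintro ⟨⟨a, b⟩, d⟩ ⟨⟨a', b'⟩, d'⟩ h
    have h0 := congrFun h 0
    have h1 := congrFun h 1
    have h3 := congrFun h 3
    simp only [paschTupleOf, Matrix.cons_val] at h0 h1 h3
    subst h0 h1 h3
    rfl
  have hcard : ∀ p ∈ (univ : Finset X).offDiag, #({p.1, p.2, star p.1 p.2} : Finset X)ᶜ =
      Fintype.card X - 3 := by
    intro p hp
    have hne := (mem_offDiag.1 hp).2.2
    rw [card_compl, card_eq_three.2 ⟨_, _, _, hne, (hq.star_ne_left hne).symm,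
      (hq.star_ne_right hne).symm, rfl⟩]
  rw [himage, Set.ncard_image_of_injective _ hinj, Set.ncard_coe_finset, card_sigma,
    sum_congr rfl hcard, sum_const, smul_eq_mul, offDiag_card, card_univ, ← Nat.mul_sub_one]

end PaschCount

/-- If `α(S) = (1/3)·C(n,2)`, the number of pasch configurations contained in
`S` is `n(n-1)(n-3)/24` (stated multiplied by 24 to stay in ℕ). -/
theorem stmt6 {X : Type*} [Fintype X] [DecidableEq X]
    (star : X → X → X) (hq : IsSteinerQuasigroup star)
    (n : ℕ) (hcard : Fintype.card X = n) (hn : 3 < n)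
    (ha : 3 * alphaInv star = n.choose 2) :
    24 * {P : Set (Finset X) | IsPasch P ∧ P ⊆ blocksOf star}.ncard =
      n * (n - 1) * (n - 3) := by
  subst hcard
  have hL := isPartialLinearSpace_ASet hq hn ha
  rw [← ncard_isPaschTuple_eq_mul_ncard_pasch,
    ncard_isPaschTuple hq (triangleImagesAreBlocks hq hn hL)]
end

section
/- Let S be a Steiner triple system of order n. Then α(S) = C(n,3) − (1/3)·C(n,2) if and only if β(S) = C(n,3). -/
section Aux
variable {X : Type*} [DecidableEq X] {star : X → X → X}

/-- ψ, well-defined on finsets. -/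
def psiMap (star : X → X → X) (t : Finset X) : Finset X :=
  t.offDiag.image (fun p => star p.1 p.2)

lemma psi_spec (hq : IsSteinerQuasigroup star) {a b c : X}
    (hab : a ≠ b) (hac : a ≠ c) (hbc : b ≠ c) :
    psiMap star {a, b, c} = {star a b, star b c, star c a} := by
  have hc := hq.2.1
  ext w
  simp only [psiMap, Finset.mem_image, Finset.mem_offDiag, Finset.mem_insert,
    Finset.mem_singleton]
  constructor
  · rintro ⟨⟨p, q⟩, ⟨h1, h2, hne⟩, rfl⟩
    dsimp only at h1 h2 hne ⊢
    rcases h1 with rfl | rfl | rfl <;> rcases h2 with rfl | rfl | rfl <;> simp_all <;>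
      first
        | (left; rfl)
        | (right; left; rfl)
        | (right; right; rfl)
        | (left; exact hc _ _)
        | (right; left; exact hc _ _)
        | (right; right; exact hc _ _)
  · rintro (rfl | rfl | rfl)
    · exact ⟨(a, b), by simp [hab], rfl⟩
    · exact ⟨(b, c), by simp [hbc], rfl⟩
    · exact ⟨(c, a), by simp [hac.symm], rfl⟩

lemma psi_card (hq : IsSteinerQuasigroup star) {a b c : X}
    (hab : a ≠ b) (hac : a ≠ c) (hbc : b ≠ c) :
    (psiMap star {a, b, c}).card = 3 := by
  rw [psi_spec hq hab hac hbc]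
  refine Finset.card_eq_three.mpr ⟨_, _, _, ?_, ?_, ?_, rfl⟩
  · intro h; rw [hq.2.1 a b] at h; exact hac (sq_cancel hq h)
  · intro h; rw [hq.2.1 c a] at h; exact hbc (sq_cancel hq h)
  · intro h; rw [hq.2.1 b c] at h; exact hab (sq_cancel hq h).symm

lemma block_prods (hq : IsSteinerQuasigroup star) {a b c : X} (h : star a b = c) :
    star b a = c ∧ star b c = a ∧ star c b = a ∧ star c a = b ∧ star a c = b := by
  have comm := hq.2.1
  have h1 : star b a = c := by rw [comm]; exact h
  have h2 : star b c = a := by rw [← h1, hq.2.2]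
  have h3 : star a c = b := by rw [← h, hq.2.2]
  exact ⟨h1, h2, by rw [comm]; exact h2, by rw [comm]; exact h3, h3⟩

/-- A block containing two distinct points is determined. -/
lemma block_eq_of_mem (hq : IsSteinerQuasigroup star) {B : Finset X} {u v : X}
    (hB : B ∈ blocksOf star) (hu : u ∈ B) (hv : v ∈ B) (huv : u ≠ v) :
    B = {u, v, star u v} := by
  obtain ⟨a, b, c, hab, hac, hbc, rfl, habc⟩ := hB
  obtain ⟨h1, h2, h3, h4, h5⟩ := block_prods hq habc
  simp only [Finset.mem_insert, Finset.mem_singleton] at hu hv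
  rcases hu with rfl | rfl | rfl <;> rcases hv with rfl | rfl | rfl <;>
    first
      | exact absurd rfl huv
      | (rw [habc]; try (ext w; simp only [Finset.mem_insert, Finset.mem_singleton]; tauto))
      | (rw [h1]; try (ext w; simp only [Finset.mem_insert, Finset.mem_singleton]; tauto))
      | (rw [h2]; try (ext w; simp only [Finset.mem_insert, Finset.mem_singleton]; tauto))
      | (rw [h3]; try (ext w; simp only [Finset.mem_insert, Finset.mem_singleton]; tauto))
      | (rw [h4]; try (ext w; simp only [Finset.mem_insert, Finset.mem_singleton]; tauto))
      | (rw [h5]; try (ext w; simp only [Finset.mem_insert, Finset.mem_singleton]; tauto))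

lemma mem_blocks_iff (hq : IsSteinerQuasigroup star) {p q r : X}
    (hpq : p ≠ q) (hpr : p ≠ r) (hqr : q ≠ r) :
    ({p, q, r} : Finset X) ∈ blocksOf star ↔ star p q = r := by
  constructor
  · intro hB
    have := block_eq_of_mem hq hB (by simp) (by simp) hpq
    have hr : r ∈ ({p, q, star p q} : Finset X) := by rw [← this]; simp
    simp only [Finset.mem_insert, Finset.mem_singleton] at hr
    rcases hr with rfl | rfl | h
    · exact absurd rfl hpr
    · exact absurd rfl hqr
    · exact h.symm
  · intro h
    exact ⟨p, q, r, hpq, hpr, hqr, rfl, h⟩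

lemma block_card (hq : IsSteinerQuasigroup star) {B : Finset X} (hB : B ∈ blocksOf star) :
    B.card = 3 := by
  obtain ⟨a, b, c, hab, hac, hbc, rfl, -⟩ := hB
  exact Finset.card_eq_three.mpr ⟨a, b, c, hab, hac, hbc, rfl⟩

lemma psi_fix (hq : IsSteinerQuasigroup star) {B : Finset X} (hB : B ∈ blocksOf star) :
    psiMap star B = B := by
  obtain ⟨a, b, c, hab, hac, hbc, rfl, habc⟩ := hB
  obtain ⟨h1, h2, h3, h4, h5⟩ := block_prods hq habc
  rw [psi_spec hq hab hac hbc, habc, h2, h4]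
  ext w; simp only [Finset.mem_insert, Finset.mem_singleton]; tauto

lemma tri_distinct (hq : IsSteinerQuasigroup star) {a b c : X}
    (hab : a ≠ b) (hac : a ≠ c) (hbc : b ≠ c) :
    star a b ≠ star b c ∧ star a b ≠ star c a ∧ star b c ≠ star c a := by
  refine ⟨?_, ?_, ?_⟩
  · intro h; rw [hq.2.1 a b] at h; exact hac (sq_cancel hq h)
  · intro h; rw [hq.2.1 c a] at h; exact hbc (sq_cancel hq h)
  · intro h; rw [hq.2.1 b c] at h; exact hab (sq_cancel hq h).symm

lemma pairs_count [Fintype X] (hq : IsSteinerQuasigroup star)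
    (SB : Finset (Finset X)) (hSB : ∀ B, B ∈ SB ↔ B ∈ blocksOf star) :
    (Fintype.card X).choose 2 = 3 * SB.card := by
  have key : (Finset.univ.powersetCard 2 : Finset (Finset X)) =
      SB.biUnion (fun B => B.powersetCard 2) := by
    ext p
    simp only [Finset.mem_powersetCard_univ, Finset.mem_biUnion, Finset.mem_powersetCard]
    constructor
    · intro hp
      obtain ⟨u, v, huv, rfl⟩ := Finset.card_eq_two.mp hp.2
      refine ⟨{u, v, star u v}, (hSB _).mpr
        ⟨u, v, star u v, huv, (star_ne_left hq huv).symm, (star_ne_right hq huv).symm,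
          rfl, rfl⟩, ?_, hp.2⟩
      intro w hw
      simp only [Finset.mem_insert, Finset.mem_singleton] at hw ⊢
      tauto
    · rintro ⟨B, hB, hsub, hcard⟩
      exact ⟨Finset.subset_univ _, hcard⟩
  have hdisj : ∀ B1 ∈ SB, ∀ B2 ∈ SB, B1 ≠ B2 →
      Disjoint (B1.powersetCard 2) (B2.powersetCard 2) := by
    intro B1 h1 B2 h2 hne
    rw [Finset.disjoint_left]
    intro q hq1 hq2
    rw [Finset.mem_powersetCard] at hq1 hq2
    obtain ⟨u, v, huv, rfl⟩ := Finset.card_eq_two.mp hq1.2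
    have hu1 : u ∈ B1 := hq1.1 (by simp)
    have hv1 : v ∈ B1 := hq1.1 (by simp)
    have hu2 : u ∈ B2 := hq2.1 (by simp)
    have hv2 : v ∈ B2 := hq2.1 (by simp)
    exact hne ((block_eq_of_mem hq ((hSB _).mp h1) hu1 hv1 huv).trans
      (block_eq_of_mem hq ((hSB _).mp h2) hu2 hv2 huv).symm)
  have h1 : (Finset.univ.powersetCard 2 : Finset (Finset X)).card =
      (Fintype.card X).choose 2 := by
    rw [Finset.card_powersetCard, Finset.card_univ]
  have h3 : ∀ B ∈ SB, (B.powersetCard 2).card = 3 := by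
    intro B hB
    rw [Finset.card_powersetCard, block_card hq ((hSB _).mp hB)]
    rfl
  rw [← h1, key, Finset.card_biUnion hdisj, Finset.sum_congr rfl h3, Finset.sum_const,
    smul_eq_mul, mul_comm]

/-- If a non-block triangle maps to a block, there are two distinct non-block triangles
with the same image. -/
lemma collision (hq : IsSteinerQuasigroup star) {a b c : X}
    (hab : a ≠ b) (hac : a ≠ c) (hbc : b ≠ c)
    (htS : ({a, b, c} : Finset X) ∉ blocksOf star)
    (hblock : psiMap star {a, b, c} ∈ blocksOf star) :
    ∃ t1 t2 : Finset X, t1.card = 3 ∧ t2.card = 3 ∧ t1 ∉ blocksOf star ∧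
      t2 ∉ blocksOf star ∧ t1 ≠ t2 ∧ psiMap star t1 = psiMap star t2 := by
  have hcomm := hq.2.1
  have hinv := hq.2.2
  rw [psi_spec hq hab hac hbc] at hblock
  obtain ⟨hxy, hxz, hyz⟩ := tri_distinct hq hab hac hbc
  -- x = star a b, y = star b c, z = star c a
  have hnb1 : star a b ≠ c := fun h => htS ⟨a, b, c, hab, hac, hbc, rfl, h⟩
  have hnb2 : star b c ≠ a := fun h => htS ⟨b, c, a, hbc, hab.symm, hac.symm,
    (by ext w; simp only [Finset.mem_insert, Finset.mem_singleton]; tauto), h⟩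
  have hnb3 : star c a ≠ b := fun h => htS ⟨c, a, b, hac.symm, hbc.symm, hab,
    (by ext w; simp only [Finset.mem_insert, Finset.mem_singleton]; tauto), h⟩
  have hxa : star a b ≠ a := star_ne_left hq hab
  have hya : star b c ≠ a := hnb2
  have hza : star c a ≠ a := star_ne_right hq hac.symm
  have hxc : star a b ≠ c := hnb1
  have hyc : star b c ≠ c := star_ne_right hq hbc
  have hzc : star c a ≠ c := star_ne_left hq hac.symm
  -- star x y = z
  have hsxy : star (star a b) (star b c) = star c a := (mem_blocks_iff hq hxy hxz hyz).mp hblock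
  -- identities
  have hax : star a (star a b) = b := hinv a b
  have hcy : star c (star b c) = b := by rw [hcomm b c]; exact hinv c b
  have hyx : star (star b c) (star a b) = star c a := by rw [hcomm]; exact hsxy
  refine ⟨{a, star a b, c}, {star b c, star a b, c}, ?_, ?_, ?_, ?_, ?_, ?_⟩
  · exact Finset.card_eq_three.mpr ⟨a, star a b, c, hxa.symm, hac, hxc, rfl⟩
  · exact Finset.card_eq_three.mpr ⟨star b c, star a b, c, hxy.symm, hyc, hxc, rfl⟩
  · intro h
    have := (mem_blocks_iff hq hxa.symm hac hxc).mp h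
    rw [hax] at this
    exact hbc this
  · intro h
    have := (mem_blocks_iff hq hxy.symm hyc hxc).mp h
    rw [hyx] at this
    exact hzc this
  · intro h
    have ha : a ∈ ({star b c, star a b, c} : Finset X) := h ▸ (by simp)
    simp only [Finset.mem_insert, Finset.mem_singleton] at ha
    rcases ha with h' | h' | h'
    · exact hya h'.symm
    · exact hxa h'.symm
    · exact hac h'
  · rw [psi_spec hq hxa.symm hac hxc, psi_spec hq hxy.symm hyc hxc, hax, hcy, hyx]
    ext w; simp only [Finset.mem_insert, Finset.mem_singleton]; tauto
end Aux

/-- `α(S) = C(n,3) − (1/3)·C(n,2)` iff `β(S) = C(n,3)`. -/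
theorem stmt9 {X : Type*} [Fintype X] [DecidableEq X]
    (star : X → X → X) (hq : IsSteinerQuasigroup star)
    (n : ℕ) (hcard : Fintype.card X = n) :
    (3 * alphaInv star : ℤ) = 3 * n.choose 3 - n.choose 2 ↔
      betaInv star = n.choose 3 := by
  classical
  subst hcard
  set SB : Finset (Finset X) := Finset.univ.filter (fun B => B ∈ blocksOf star) with hSBdef
  have hSB : ∀ B, B ∈ SB ↔ B ∈ blocksOf star := by
    intro B; rw [hSBdef]; simp
  set DF : Finset (Finset X) := Finset.univ.powersetCard 3 with hDFdef
  have hDF : ∀ t : Finset X, t ∈ DF ↔ t.card = 3 := by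
    intro t; rw [hDFdef]; simp [Finset.mem_powersetCard]
  have hSsubD : SB ⊆ DF := fun B hB => (hDF B).mpr (block_card hq ((hSB B).mp hB))
  have hDcard : DF.card = (Fintype.card X).choose 3 := by
    rw [hDFdef, Finset.card_powersetCard, Finset.card_univ]
  have hpair : (Fintype.card X).choose 2 = 3 * SB.card := pairs_count hq SB hSB
  have hAset : ASet star = ↑((DF \ SB).image (psiMap star)) := by
    ext s
    simp only [ASet, Set.mem_setOf_eq, Finset.coe_image, Set.mem_image, Finset.mem_coe,
      Finset.mem_sdiff]
    constructor
    · rintro ⟨a, b, c, hab, hac, hbc, hnb, rfl⟩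
      exact ⟨{a, b, c}, ⟨(hDF _).mpr (Finset.card_eq_three.mpr ⟨a, b, c, hab, hac, hbc, rfl⟩),
        fun h => hnb ((hSB _).mp h)⟩, psi_spec hq hab hac hbc⟩
    · rintro ⟨t, ⟨htD, htS⟩, rfl⟩
      obtain ⟨a, b, c, hab, hac, hbc, rfl⟩ := Finset.card_eq_three.mp ((hDF t).mp htD)
      exact ⟨a, b, c, hab, hac, hbc, fun h => htS ((hSB _).mpr h),
        psi_spec hq hab hac hbc⟩
  have hBset : BSet star = ↑(DF.image (psiMap star)) := by
    ext s
    simp only [BSet, Set.mem_setOf_eq, Finset.coe_image, Set.mem_image, Finset.mem_coe]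
    constructor
    · rintro ⟨a, b, c, hab, hac, hbc, rfl⟩
      exact ⟨{a, b, c}, (hDF _).mpr (Finset.card_eq_three.mpr ⟨a, b, c, hab, hac, hbc, rfl⟩),
        psi_spec hq hab hac hbc⟩
    · rintro ⟨t, htD, rfl⟩
      obtain ⟨a, b, c, hab, hac, hbc, rfl⟩ := Finset.card_eq_three.mp ((hDF t).mp htD)
      exact ⟨a, b, c, hab, hac, hbc, psi_spec hq hab hac hbc⟩
  have halpha : alphaInv star = ((DF \ SB).image (psiMap star)).card := by
    rw [alphaInv, hAset, Set.ncard_coe_finset]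
  have hbeta : betaInv star = (DF.image (psiMap star)).card := by
    rw [betaInv, hBset, Set.ncard_coe_finset]
  have hAiff : ((DF \ SB).image (psiMap star)).card = (DF \ SB).card ↔
      Set.InjOn (psiMap star) ↑(DF \ SB) := Finset.card_image_iff
  have hBiff : (DF.image (psiMap star)).card = DF.card ↔
      Set.InjOn (psiMap star) ↑DF := Finset.card_image_iff
  have main : Set.InjOn (psiMap star) ↑(DF \ SB) ↔ Set.InjOn (psiMap star) ↑DF := by
    constructor
    · intro hInj
      have hno : ∀ t ∈ DF, t ∉ SB → psiMap star t ∉ blocksOf star := by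
        intro t htD htS hbl
        obtain ⟨a, b, c, hab, hac, hbc, rfl⟩ := Finset.card_eq_three.mp ((hDF t).mp htD)
        obtain ⟨t1, t2, hc1, hc2, hn1, hn2, hne, heq⟩ :=
          collision hq hab hac hbc (fun h => htS ((hSB _).mpr h)) hbl
        have m1 : t1 ∈ (↑(DF \ SB) : Set (Finset X)) := by
          simp only [Finset.coe_sdiff, Set.mem_diff, Finset.mem_coe]
          exact ⟨(hDF t1).mpr hc1, fun h => hn1 ((hSB _).mp h)⟩
        have m2 : t2 ∈ (↑(DF \ SB) : Set (Finset X)) := by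
          simp only [Finset.coe_sdiff, Set.mem_diff, Finset.mem_coe]
          exact ⟨(hDF t2).mpr hc2, fun h => hn2 ((hSB _).mp h)⟩
        exact hne (hInj m1 m2 heq)
      intro t1 ht1 t2 ht2 heq
      rw [Finset.mem_coe] at ht1 ht2
      by_cases h1 : t1 ∈ SB <;> by_cases h2 : t2 ∈ SB
      · rw [← psi_fix hq ((hSB _).mp h1), ← psi_fix hq ((hSB _).mp h2), heq]
      · exact False.elim ((hno t2 ht2 h2)
          (by rw [← heq, psi_fix hq ((hSB _).mp h1)]; exact (hSB _).mp h1))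
      · exact False.elim ((hno t1 ht1 h1)
          (by rw [heq, psi_fix hq ((hSB _).mp h2)]; exact (hSB _).mp h2))
      · refine hInj ?_ ?_ heq
        · simp only [Finset.coe_sdiff, Set.mem_diff, Finset.mem_coe]
          exact ⟨ht1, h1⟩
        · simp only [Finset.coe_sdiff, Set.mem_diff, Finset.mem_coe]
          exact ⟨ht2, h2⟩
    · intro h
      exact h.mono (Finset.coe_subset.mpr Finset.sdiff_subset)
  rw [halpha, hbeta, ← hDcard]
  have hle : ((DF \ SB).image (psiMap star)).card ≤ (DF \ SB).card := Finset.card_image_le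
  have hle2 : (DF.image (psiMap star)).card ≤ DF.card := Finset.card_image_le
  have hsd : (DF \ SB).card = DF.card - SB.card := Finset.card_sdiff_of_subset hSsubD
  have hSle : SB.card ≤ DF.card := Finset.card_le_card hSsubD
  constructor
  · intro h
    refine hBiff.mpr (main.mp (hAiff.mp ?_))
    omega
  · intro h
    have h2 := hAiff.mpr (main.mpr (hBiff.mp h))
    omega
end
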